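/- Let n be a positive integer with n ≡ 3 (mod 6). Then the cokernel group G_n is isomorphic to (ℤ/2ℤ) × (ℤ/2ℤ). -/

import Mathlib

open Matrix

/-- The adjacency matrix of the Cayley graph `C_n` of `ℤ/nℤ` with respect to `{1, n-1}`. -/
def cayleyAdj (n : ℕ) : Matrix (ZMod n) (ZMod n) ℤ :=
  Matrix.of fun i j => (if j = i + 1 then 1 else 0) + (if j = i - 1 then 1 else 0)

/-- The matrix `B_n = I - A_nᵀ`. -/
def cayleyB (n : ℕ) : Matrix (ZMod n) (ZMod n) ℤ :=
  1 - (cayleyAdj n)ᵀ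

/-- The image of `B_n`, viewed as a linear map by matrix-vector multiplication. -/
def imB (n : ℕ) [NeZero n] : Submodule ℤ (ZMod n → ℤ) :=
  LinearMap.range (cayleyB n).mulVecLin

/-- The cokernel group `G_n = (ZMod n → ℤ) ⧸ Im(B_n)`. -/
abbrev cayleyCoker (n : ℕ) [NeZero n] : Type :=
  (ZMod n → ℤ) ⧸ imB n

/-- The class `[e_i]` of the standard basis vector `e_i` in `G_n`. -/
def eClass (n : ℕ) [NeZero n] (i : ZMod n) : cayleyCoker n :=
  Submodule.Quotient.mk (Pi.single i 1)

/-!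
In `G_n` the column relations of `B_n` read `[e_{j+1}] = [e_j] - [e_{j-1}]`, so
`[e_{j+3}] = -[e_j]` and the classes are 6-periodic. When `n ≡ 3 (mod 6)`, going once around
the cycle gives `[e_j] = -[e_j]`; hence `G_n` is generated by `x = [e_0]` and `y = [e_1]`, both of
order dividing 2, with `[e_j]` equal to `x`, `y`, `x + y` according to `j mod 3`. Conversely
`e_j ↦ (1,0), (0,1), (1,1)` for `j ≡ 0, 1, 2 (mod 3)` kills the relations, and the two maps are
mutually inverse.
-/

section Recurrence

variable {R M : Type*} [Ring R] [AddCommGroup M]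

lemma apply_add_two_of_recurrence {f : R → M} (hf : ∀ j, f (j + 1) = f j - f (j - 1))
    (j : R) : f (j + 2) = f (j + 1) - f j := by
  have := hf (j + 1)
  rwa [add_sub_cancel_right, add_assoc, one_add_one_eq_two] at this

lemma apply_add_three_of_recurrence {f : R → M} (hf : ∀ j, f (j + 1) = f j - f (j - 1))
    (j : R) : f (j + 3) = -f j := by
  have h3 : j + 3 = (j + 1) + 2 := by rw [add_assoc]; norm_num
  rw [h3, apply_add_two_of_recurrence hf, add_assoc, one_add_one_eq_two,
    apply_add_two_of_recurrence hf]
  abel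

lemma apply_add_six_mul_of_recurrence {f : R → M} (hf : ∀ j, f (j + 1) = f j - f (j - 1))
    (j : R) (m : ℕ) : f (j + 6 * m) = f j := by
  induction m with
  | zero => simp
  | succ m ih =>
    rw [show j + 6 * ((m + 1 : ℕ) : R) = j + 6 * m + 3 + 3 by
      push_cast; rw [mul_add, mul_one, add_assoc, add_assoc]; norm_num,
      apply_add_three_of_recurrence hf, apply_add_three_of_recurrence hf, neg_neg, ih]

lemma apply_add_apply_eq_zero_of_recurrence {f : R → M}
    (hf : ∀ j, f (j + 1) = f j - f (j - 1)) {k : ℕ} (hk : (k : R) = 0) (h6 : k % 6 = 3)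
    (j : R) : f j + f j = 0 := by
  obtain ⟨m, rfl⟩ : ∃ m, k = 6 * m + 3 := ⟨k / 6, by omega⟩
  push_cast at hk
  have hneg : f j = -f j :=
    calc f j = f (j + (6 * m + 3)) := by rw [hk, add_zero]
      _ = -f j := by
        rw [← add_assoc, apply_add_three_of_recurrence hf, apply_add_six_mul_of_recurrence hf]
  exact eq_neg_iff_add_eq_zero.mp hneg

lemma apply_natCast_eq_of_recurrence {f g : R → M} (hf : ∀ j, f (j + 1) = f j - f (j - 1))
    (hg : ∀ j, g (j + 1) = g j - g (j - 1)) (h0 : f 0 = g 0) (h1 : f 1 = g 1) :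
    ∀ k : ℕ, f k = g k
  | 0 => by simpa using h0
  | 1 => by simpa using h1
  | k + 2 => by
    push_cast
    rw [apply_add_two_of_recurrence hf, apply_add_two_of_recurrence hg,
      ← Nat.cast_succ, apply_natCast_eq_of_recurrence hf hg h0 h1 (k + 1),
      apply_natCast_eq_of_recurrence hf hg h0 h1 k]

end Recurrence

def zmodTwoLift {G : Type*} [AddCommGroup G] (x : G) (hx : x + x = 0) : ZMod 2 →+ G :=
  ZMod.lift 2 ⟨zmultiplesHom G x, by simpa [two_zsmul] using hx⟩

lemma zmodTwoLift_one {G : Type*} [AddCommGroup G] (x : G) (hx : x + x = 0) :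
    zmodTwoLift x hx 1 = x := by
  change ZMod.lift 2 _ ((1 : ℤ) : ZMod 2) = x
  rw [ZMod.lift_coe]
  exact one_zsmul x

def kleinPattern : ZMod 3 → ZMod 2 × ZMod 2 := ![(1, 0), (0, 1), (1, 1)]

lemma kleinPattern_add_one (c : ZMod 3) :
    kleinPattern (c + 1) = kleinPattern c - kleinPattern (c - 1) := by
  revert c; decide

lemma kleinPattern_zero : kleinPattern 0 = (1, 0) := rfl

lemma kleinPattern_one : kleinPattern 1 = (0, 1) := rfl

section Cokernel

variable (n : ℕ) [NeZero n]

lemma cayleyB_mulVec_single (j : ZMod n) :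
    cayleyB n *ᵥ Pi.single j 1 = Pi.single j 1 - Pi.single (j + 1) 1 - Pi.single (j - 1) 1 := by
  ext i
  simp only [Matrix.mulVec_single_one, Matrix.col_apply, cayleyB, cayleyAdj, Matrix.sub_apply,
    Matrix.one_apply, Matrix.transpose_apply, Matrix.of_apply, Pi.sub_apply, Pi.single_apply,
    sub_add_eq_sub_sub]

lemma eClass_add_one (j : ZMod n) : eClass n (j + 1) = eClass n j - eClass n (j - 1) := by
  have hcol : Pi.single j 1 - Pi.single (j + 1) 1 - Pi.single (j - 1) 1 ∈ imB n :=
    ⟨Pi.single j 1, cayleyB_mulVec_single n j⟩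
  have hrel : eClass n j - eClass n (j + 1) - eClass n (j - 1) = 0 := by
    simpa only [eClass, ← Submodule.Quotient.mk_sub] using (Submodule.Quotient.mk_eq_zero _).2 hcol
  rw [← sub_eq_zero, ← neg_eq_zero, ← hrel]
  abel

lemma eClass_add_eClass_self (h : n % 6 = 3) (j : ZMod n) : eClass n j + eClass n j = 0 :=
  apply_add_apply_eq_zero_of_recurrence (eClass_add_one n) (ZMod.natCast_self n) h j

noncomputable def kleinCoord (h3 : 3 ∣ n) : (ZMod n → ℤ) →ₗ[ℤ] ZMod 2 × ZMod 2 :=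
  Fintype.linearCombination ℤ (kleinPattern ∘ ZMod.castHom h3 (ZMod 3))

lemma kleinCoord_single (h3 : 3 ∣ n) (i : ZMod n) :
    kleinCoord n h3 (Pi.single i 1) = kleinPattern (ZMod.castHom h3 (ZMod 3) i) := by
  simp [kleinCoord]

lemma imB_le_ker_kleinCoord (h3 : 3 ∣ n) : imB n ≤ LinearMap.ker (kleinCoord n h3) := by
  rw [imB, LinearMap.range_le_ker_iff]
  ext j : 2
  simp only [LinearMap.comp_apply, LinearMap.zero_apply, Matrix.mulVecLin_apply,
    LinearMap.single_apply, cayleyB_mulVec_single, map_sub, kleinCoord_single, map_add, map_one]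
  rw [kleinPattern_add_one, sub_sub_cancel, sub_self]

noncomputable def cokerToKlein (h3 : 3 ∣ n) : cayleyCoker n →ₗ[ℤ] ZMod 2 × ZMod 2 :=
  (imB n).liftQ (kleinCoord n h3) (imB_le_ker_kleinCoord n h3)

lemma cokerToKlein_eClass (h3 : 3 ∣ n) (i : ZMod n) :
    cokerToKlein n h3 (eClass n i) = kleinPattern (ZMod.castHom h3 (ZMod 3) i) :=
  kleinCoord_single n h3 i

noncomputable def kleinToCoker (h : n % 6 = 3) : ZMod 2 × ZMod 2 →+ cayleyCoker n :=
  (zmodTwoLift _ (eClass_add_eClass_self n h 0)).coprod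
    (zmodTwoLift _ (eClass_add_eClass_self n h 1))

lemma kleinToCoker_kleinPattern (h3 : 3 ∣ n) (h : n % 6 = 3) (i : ZMod n) :
    kleinToCoker n h (kleinPattern (ZMod.castHom h3 (ZMod 3) i)) = eClass n i := by
  rw [← ZMod.natCast_zmod_val i]
  refine (apply_natCast_eq_of_recurrence (eClass_add_one n)
    (g := fun j => kleinToCoker n h (kleinPattern (ZMod.castHom h3 (ZMod 3) j)))
    ?_ ?_ ?_ i.val).symm
  · intro j
    rw [map_add, map_one, kleinPattern_add_one, map_sub, map_sub, map_one]
  all_goals simp only [map_zero, map_one, kleinPattern_zero, kleinPattern_one, kleinToCoker,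
    AddMonoidHom.coprod_apply, zmodTwoLift_one, add_zero, zero_add]

lemma kleinToCoker_comp_cokerToKlein (h3 : 3 ∣ n) (h : n % 6 = 3) :
    (kleinToCoker n h).toIntLinearMap ∘ₗ cokerToKlein n h3 = LinearMap.id := by
  apply Submodule.linearMap_qext
  ext i : 2
  change kleinToCoker n h (cokerToKlein n h3 (eClass n i)) = eClass n i
  rw [cokerToKlein_eClass, kleinToCoker_kleinPattern]

lemma cokerToKlein_comp_kleinToCoker (h3 : 3 ∣ n) (h : n % 6 = 3) :
    cokerToKlein n h3 ∘ₗ (kleinToCoker n h).toIntLinearMap = LinearMap.id := by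
  refine LinearMap.ext fun ⟨a, b⟩ => ?_
  have hcases : ∀ c : ZMod 2, c = 0 ∨ c = 1 := by decide
  rcases hcases a with rfl | rfl <;> rcases hcases b with rfl | rfl <;>
    simp only [LinearMap.comp_apply, AddMonoidHom.coe_toIntLinearMap, kleinToCoker,
      AddMonoidHom.coprod_apply, map_zero, zmodTwoLift_one, map_add, cokerToKlein_eClass,
      map_one, kleinPattern_zero, kleinPattern_one, LinearMap.id_apply] <;>
    decide

end Cokernel

theorem coker_klein_of_three_mod_six (n : ℕ) [NeZero n]
    (h : n % 6 = 3) :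
    Nonempty (cayleyCoker n ≃+ (ZMod 2 × ZMod 2)) := by
  have h3 : 3 ∣ n := by omega
  exact ⟨(LinearEquiv.ofLinearMap _ _ (cokerToKlein_comp_kleinToCoker n h3 h)
    (kleinToCoker_comp_cokerToKlein n h3 h)).toAddEquiv⟩
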